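/- Let G ≤ Aut(X,λ) be an ergodic full group and A, B Borel subsets of X with λ(A \ B) = λ(B \ A). Then there exists an involution U ∈ G supported in A Δ B such that U(A) = B. -/

import Mathlib

open MeasureTheory Set Filter Topology Function
open scoped ENNReal symmDiff

variable {X : Type*}

def supp (T : X → X) : Set X := {x | T x ≠ x}

def IsMPBij [MeasurableSpace X] (ν : MeasureTheory.Measure X) (T : X → X) : Prop :=
  Measurable T ∧ Function.Bijective T ∧ MeasureTheory.MeasurePreserving T ν ν

def IsMPSubgroup [MeasurableSpace X] (ν : MeasureTheory.Measure X) (G : Set (X → X)) : Prop :=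
  (∀ T ∈ G, IsMPBij ν T) ∧ id ∈ G ∧ (∀ T ∈ G, ∀ S ∈ G, T ∘ S ∈ G) ∧
    ∀ T ∈ G, ∃ S ∈ G, Function.LeftInverse S T ∧ Function.RightInverse S T

def IsErgodicSet [MeasurableSpace X] (ν : MeasureTheory.Measure X) (G : Set (X → X)) : Prop :=
  ∀ A : Set X, MeasurableSet A → (∀ T ∈ G, ν ((T '' A) ∆ A) = 0) → ν A = 0 ∨ ν Aᶜ = 0

def IsFullGroup [MeasurableSpace X] (ν : MeasureTheory.Measure X) (G : Set (X → X)) : Prop :=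
  IsMPSubgroup ν G ∧
  (∀ T S : X → X, T ∈ G → IsMPBij ν S → T =ᵐ[ν] S → S ∈ G) ∧
  ∀ (T : X → X) (Ts : ℕ → X → X) (A : ℕ → Set X),
    IsMPBij ν T → (∀ n, Ts n ∈ G) → (∀ n, MeasurableSet (A n)) →
    Pairwise (Disjoint on A) → (⋃ n, A n) = Set.univ →
    (∀ n, ∀ x ∈ A n, T x = Ts n x) → T ∈ G

def WeakTendsto [MeasurableSpace X] (ν : MeasureTheory.Measure X)
    (T : ℕ → X → X) (S : X → X) : Prop :=
  ∀ B : Set X, MeasurableSet B → ν B < ⊤ →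
    Filter.Tendsto (fun n => ν ((T n '' B) ∆ (S '' B))) Filter.atTop (nhds 0)

def fullGroupGen [MeasurableSpace X] (ν : MeasureTheory.Measure X) (T : X → X) :
    Set (X → X) :=
  {S | ∀ G : Set (X → X), IsFullGroup ν G → T ∈ G → S ∈ G}

set_option linter.unusedSectionVars false
set_option maxHeartbeats 1000000

section Basics

variable [MeasurableSpace X] [StandardBorelSpace X] {ν : MeasureTheory.Measure X}
  {G : Set (X → X)}

lemma IsMPBij.meas_image {T : X → X} (hT : IsMPBij ν T) {s : Set X} (hs : MeasurableSet s) :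
    MeasurableSet (T '' s) :=
  (hT.1.measurableEmbedding hT.2.1.injective).measurableSet_image' hs

lemma IsMPBij.measure_image {T : X → X} (hT : IsMPBij ν T) {s : Set X} (hs : MeasurableSet s) :
    ν (T '' s) = ν s := by
  have := hT.2.2.measure_preimage (hT.meas_image hs).nullMeasurableSet
  rw [Set.preimage_image_eq s hT.2.1.injective] at this
  exact this.symm

lemma memG_bij (hG : IsFullGroup ν G) {T : X → X} (hT : T ∈ G) : IsMPBij ν T :=
  hG.1.1 T hT

lemma memG_inv (hG : IsFullGroup ν G) {T : X → X} (hT : T ∈ G) :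
    ∃ S ∈ G, Function.LeftInverse S T ∧ Function.RightInverse S T :=
  hG.1.2.2.2 T hT

/-- Key ergodicity lemma: any two non-null sets can be brought to intersect by some `T ∈ G`. -/
lemma exists_image_inter_pos (hG : IsFullGroup ν G) (herg : IsErgodicSet ν G) [SigmaFinite ν]
    {P Q : Set X} (hP : MeasurableSet P) (hQ : MeasurableSet Q)
    (hP0 : ν P ≠ 0) (hQ0 : ν Q ≠ 0) : ∃ T ∈ G, ν (T '' P ∩ Q) ≠ 0 := by
  by_contra hcon
  push_neg at hcon
  obtain ⟨μ, hμfin, hνμ, hμν⟩ := exists_isFiniteMeasure_absolutelyContinuous ν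
  -- the supremum of measures of countable unions of images of P
  set c : ℝ≥0∞ := ⨆ F : {F : ℕ → X → X // ∀ n, F n ∈ G}, μ (⋃ n, F.1 n '' P) with hc
  have hmemid : (id : X → X) ∈ G := hG.1.2.1
  have hne : Nonempty {F : ℕ → X → X // ∀ n, F n ∈ G} := ⟨⟨fun _ => id, fun _ => hmemid⟩⟩
  have hcfin : c ≠ ∞ := by
    refine ne_top_of_le_ne_top (measure_ne_top μ univ) (iSup_le fun F => measure_mono (subset_univ _))
  have hμP : μ P ≠ 0 := fun h => hP0 (hνμ h)
  have hc0 : c ≠ 0 := by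
    intro h0
    apply hμP
    have hle : μ (⋃ _n : ℕ, (id : X → X) '' P) ≤ c :=
      le_iSup (fun F : {F : ℕ → X → X // ∀ n, F n ∈ G} => μ (⋃ n, F.1 n '' P))
        ⟨fun _ => id, fun _ => hmemid⟩
    simpa [h0, le_zero_iff] using hle
  -- choose near-optimal families
  have hch : ∀ k : ℕ, ∃ F : {F : ℕ → X → X // ∀ n, F n ∈ G},
      c - (k : ℝ≥0∞)⁻¹ < μ (⋃ n, F.1 n '' P) := by
    intro k
    have : c - (k : ℝ≥0∞)⁻¹ < c := by
      refine ENNReal.sub_lt_self hcfin hc0 ?_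
      simp [ENNReal.inv_ne_zero]
    rw [hc] at this
    exact lt_iSup_iff.mp this
  choose Fk hFk using hch
  -- the combined invariant-ish set C
  set Fc : ℕ → X → X := fun m => (Fk (Nat.unpair m).1).1 (Nat.unpair m).2 with hFc
  have hFcG : ∀ m, Fc m ∈ G := fun m => (Fk (Nat.unpair m).1).2 _
  set C : Set X := ⋃ m, Fc m '' P with hC
  have hCmeas : MeasurableSet C :=
    MeasurableSet.iUnion fun m => (memG_bij hG (hFcG m)).meas_image hP
  -- μ of any admissible union together with C is at most c, so is null outside C
  have hkey : ∀ (H : ℕ → X → X), (∀ n, H n ∈ G) → μ ((⋃ n, H n '' P) \ C) = 0 := by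
    intro H hH
    have hCH : C ∪ ⋃ n, H n '' P = ⋃ n, (fun m => if m % 2 = 0 then Fc (m / 2) else H (m / 2)) n '' P := by
      ext x
      simp only [mem_union, mem_iUnion, hC]
      constructor
      · rintro (⟨m, hm⟩ | ⟨m, hm⟩)
        · exact ⟨2 * m, by simpa using hm⟩
        · refine ⟨2 * m + 1, ?_⟩
          have h1 : (2 * m + 1) % 2 = 1 := by omega
          have h2 : (2 * m + 1) / 2 = m := by omega
          simp [h1, h2, hm]
      · rintro ⟨m, hm⟩
        by_cases hpar : m % 2 = 0
        · left; exact ⟨m / 2, by simpa [hpar] using hm⟩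
        · right; exact ⟨m / 2, by simpa [hpar] using hm⟩
    have hCHle : μ (C ∪ ⋃ n, H n '' P) ≤ c := by
      rw [hCH]
      exact le_iSup (fun F : {F : ℕ → X → X // ∀ n, F n ∈ G} => μ (⋃ n, F.1 n '' P))
        ⟨fun m => if m % 2 = 0 then Fc (m / 2) else H (m / 2),
          fun n => by by_cases hpar : n % 2 = 0 <;> simp [hpar, hFcG _, hH _]⟩
    -- μ C = c
    have hCc : μ C = c := by
      have hle : μ C ≤ c :=
        le_iSup (fun F : {F : ℕ → X → X // ∀ n, F n ∈ G} => μ (⋃ n, F.1 n '' P))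
          ⟨Fc, hFcG⟩
      refine le_antisymm hle ?_
      by_contra hlt
      push_neg at hlt
      have hδ : c - μ C ≠ 0 := by
        simp only [ne_eq, tsub_eq_zero_iff_le, not_le]; exact hlt
      obtain ⟨n, hn⟩ := ENNReal.exists_inv_nat_lt hδ
      have h1 : μ (⋃ i, (Fk n).1 i '' P) ≤ μ C := by
        refine measure_mono (iUnion_subset fun i => ?_)
        refine subset_iUnion_of_subset (Nat.pair n i) ?_
        simp [hFc, Nat.unpair_pair]
      have h2 : μ C ≤ c - (n : ℝ≥0∞)⁻¹ := by
        calc μ C = c - (c - μ C) := (ENNReal.sub_sub_cancel hcfin hle).symm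
        _ ≤ c - (n : ℝ≥0∞)⁻¹ := tsub_le_tsub_left hn.le c
      exact absurd (lt_of_le_of_lt (h1.trans h2) (hFk n)) (lt_irrefl _).elim
    have : μ (C ∪ ⋃ n, H n '' P) ≤ μ C := hCc ▸ hCHle
    have hsub : ((⋃ n, H n '' P) \ C) ⊆ (C ∪ ⋃ n, H n '' P) \ C := by
      intro x hx; exact ⟨Or.inr hx.1, hx.2⟩
    refine le_antisymm ?_ (zero_le)
    calc μ ((⋃ n, H n '' P) \ C) ≤ μ ((C ∪ ⋃ n, H n '' P) \ C) := measure_mono hsub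
    _ = μ (C ∪ ⋃ n, H n '' P) - μ C :=
        measure_diff subset_union_left hCmeas.nullMeasurableSet (measure_ne_top μ C)
    _ ≤ μ C - μ C := tsub_le_tsub_right this _
    _ = 0 := tsub_self _
  -- P ⊆ C a.e.
  have hPC : ν (P \ C) = 0 := by
    refine hνμ ?_
    have h1 := hkey (fun _ => id) (fun _ => hmemid)
    have : (⋃ _n : ℕ, (id : X → X) '' P) = P := by
      simp only [image_id, iUnion_const]
    rwa [this] at h1
  -- C is a.e. invariant
  have hinv : ∀ S ∈ G, ν ((S '' C) ∆ C) = 0 := by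
    intro S hS
    have hSC : ν ((S '' C) \ C) = 0 := by
      refine hνμ ?_
      have h1 := hkey (fun n => S ∘ Fc n) (fun n => hG.1.2.2.1 S hS _ (hFcG n))
      have himg : S '' C = ⋃ n, (S ∘ Fc n) '' P := by
        rw [hC, image_iUnion]
        simp only [← image_comp]
      rwa [← himg] at h1
    obtain ⟨g, hgG, hgl, hgr⟩ := memG_inv hG hS
    have hgC : ν ((g '' C) \ C) = 0 := by
      refine hνμ ?_
      have h1 := hkey (fun n => g ∘ Fc n) (fun n => hG.1.2.2.1 g hgG _ (hFcG n))
      have himg : g '' C = ⋃ n, (g ∘ Fc n) '' P := by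
        rw [hC, image_iUnion]
        simp only [← image_comp]
      rwa [← himg] at h1
    have hCSC : ν (C \ S '' C) = 0 := by
      have hset : C \ S '' C = S '' ((g '' C) \ C) := by
        rw [Set.image_diff (memG_bij hG hS).2.1.injective, ← Set.image_comp]
        have : S ∘ g = id := funext fun x => hgr x
        rw [this, Set.image_id]
      rw [hset, (memG_bij hG hS).measure_image]
      · exact hgC
      · exact ((memG_bij hG hgG).meas_image hCmeas).diff hCmeas
    rw [Set.symmDiff_def]
    exact measure_union_null hSC hCSC
  have hsplit : ∀ S C' : Set X, ν S ≤ ν (S \ C') + ν (S ∩ C') := by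
    intro S C'
    refine (measure_mono ?_).trans (measure_union_le _ _)
    intro x hx
    by_cases h : x ∈ C'
    · exact Or.inr ⟨hx, h⟩
    · exact Or.inl ⟨hx, h⟩
  rcases herg C hCmeas hinv with h0 | h0
  · apply hP0
    refine le_antisymm ?_ (zero_le)
    calc ν P ≤ ν (P \ C) + ν (P ∩ C) := hsplit P C
    _ ≤ 0 + ν C := add_le_add hPC.le (measure_mono inter_subset_right)
    _ = 0 := by rw [zero_add, h0]
  · -- Q is a.e. inside C, so meets some image
    have hQcap : ν (Q \ C) ≤ ν Cᶜ := measure_mono fun x hx => hx.2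
    have hQC : ν (Q ∩ C) ≠ 0 := by
      intro hz
      apply hQ0
      refine le_antisymm ?_ (zero_le)
      calc ν Q ≤ ν (Q \ C) + ν (Q ∩ C) := hsplit Q C
      _ ≤ ν Cᶜ + 0 := add_le_add hQcap hz.le
      _ = 0 := by rw [add_zero, h0]
    apply hQC
    have hQCeq : Q ∩ C = ⋃ m, Fc m '' P ∩ Q := by
      rw [Set.inter_comm, hC, Set.iUnion_inter]
    rw [hQCeq]
    refine measure_iUnion_null fun m => hcon _ (hFcG m)

end Basics

/-- A partial piecewise-`G` injection from `P` into `Q`. -/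
def PartialFam [MeasurableSpace X] (ν : MeasureTheory.Measure X) (G : Set (X → X))
    (P Q : Set X) (A : ℕ → Set X) (f : ℕ → X → X) : Prop :=
  (∀ n, MeasurableSet (A n)) ∧ (∀ n, A n ⊆ P) ∧ (∀ n, f n ∈ G) ∧
  (∀ n, f n '' A n ⊆ Q) ∧ Pairwise (Disjoint on A) ∧
  Pairwise (Disjoint on fun n => f n '' A n)

section Exh

variable [MeasurableSpace X] [StandardBorelSpace X] {ν : MeasureTheory.Measure X}
  {G : Set (X → X)} [SigmaFinite ν]

lemma exh (hG : IsFullGroup ν G) (herg : IsErgodicSet ν G)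
    {P Q : Set X} (hP : MeasurableSet P) (hQ : MeasurableSet Q) :
    ∃ (A : ℕ → Set X) (f : ℕ → X → X), PartialFam ν G P Q A f ∧
      (ν (P \ ⋃ n, A n) = 0 ∨ ν (Q \ ⋃ n, f n '' A n) = 0) := by
  obtain ⟨μ, hμfin, hνμ, hμν⟩ := exists_isFiniteMeasure_absolutelyContinuous ν
  have hmemid : (id : X → X) ∈ G := hG.1.2.1
  -- greedy choice
  have hstep : ∀ R S : Set X, ∃ T, T ∈ G ∧
      (⨆ T' ∈ G, μ (T' '' R ∩ S)) ≤ 2 * μ (T '' R ∩ S) := by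
    intro R S
    set s : ℝ≥0∞ := ⨆ T' ∈ G, μ (T' '' R ∩ S) with hs
    have hsfin : s ≠ ∞ := by
      refine ne_top_of_le_ne_top (measure_ne_top μ univ) ?_
      exact iSup₂_le fun T' _ => measure_mono (subset_univ _)
    rcases eq_or_ne s 0 with h0 | h0
    · exact ⟨id, hmemid, by rw [h0]; exact zero_le⟩
    · have hhalf : s / 2 < s := ENNReal.half_lt_self h0 hsfin
      rw [hs] at hhalf
      obtain ⟨T, hT⟩ := lt_iSup_iff.mp hhalf
      by_cases hTG : T ∈ G
      · rw [iSup_pos hTG] at hT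
        refine ⟨T, hTG, ?_⟩
        calc s = 2 * (s / 2) := (ENNReal.mul_div_cancel two_ne_zero ENNReal.ofNat_ne_top).symm
        _ ≤ 2 * μ (T '' R ∩ S) := mul_le_mul_right hT.le _
      · rw [iSup_neg hTG] at hT
        exact absurd hT (by simp)
  choose Tch hTchG hTchS using hstep
  -- the recursive exhaustion
  set step : Set X × Set X → Set X × Set X := fun p =>
    (p.1 \ (p.1 ∩ (Tch p.1 p.2) ⁻¹' p.2), p.2 \ (Tch p.1 p.2 '' (p.1 ∩ (Tch p.1 p.2) ⁻¹' p.2)))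
    with hstepdef
  set seq : ℕ → Set X × Set X := fun n => Nat.rec (P, Q) (fun _ p => step p) n with hseq
  set Tn : ℕ → X → X := fun n => Tch (seq n).1 (seq n).2 with hTn
  set An : ℕ → Set X := fun n => (seq n).1 ∩ (Tn n) ⁻¹' (seq n).2 with hAn
  set Bn : ℕ → Set X := fun n => Tn n '' An n with hBn
  have hseq_succ : ∀ n, seq (n + 1) = ((seq n).1 \ An n, (seq n).2 \ Bn n) := fun n => rfl
  have hTnG : ∀ n, Tn n ∈ G := fun n => hTchG _ _
  have hBeq : ∀ n, Bn n = Tn n '' (seq n).1 ∩ (seq n).2 := fun n =>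
    Set.image_inter_preimage _ _ _
  have hBsub : ∀ n, Bn n ⊆ (seq n).2 := fun n => (hBeq n) ▸ inter_subset_right
  have hAsub : ∀ n, An n ⊆ (seq n).1 := fun n => inter_subset_left
  have hmeas : ∀ n, MeasurableSet (seq n).1 ∧ MeasurableSet (seq n).2 := by
    intro n
    induction n with
    | zero => exact ⟨hP, hQ⟩
    | succ n ih =>
      have hTm : Measurable (Tn n) := (memG_bij hG (hTnG n)).1
      have hAm : MeasurableSet (An n) := ih.1.inter (hTm ih.2)
      rw [hseq_succ n]
      exact ⟨ih.1.diff hAm, ih.2.diff ((memG_bij hG (hTnG n)).meas_image hAm)⟩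
  have hAmeas : ∀ n, MeasurableSet (An n) :=
    fun n => (hmeas n).1.inter ((memG_bij hG (hTnG n)).1 (hmeas n).2)
  have hBmeas : ∀ n, MeasurableSet (Bn n) :=
    fun n => (memG_bij hG (hTnG n)).meas_image (hAmeas n)
  have hsubP : ∀ n, (seq n).1 ⊆ P ∧ (seq n).2 ⊆ Q := by
    intro n
    induction n with
    | zero => exact ⟨subset_rfl, subset_rfl⟩
    | succ n ih =>
      rw [hseq_succ n]
      exact ⟨diff_subset.trans ih.1, diff_subset.trans ih.2⟩
  have hanti : ∀ m n, m ≤ n → (seq n).1 ⊆ (seq m).1 ∧ (seq n).2 ⊆ (seq m).2 := by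
    intro m n hmn
    induction n with
    | zero => rw [Nat.le_zero.mp hmn]; exact ⟨subset_rfl, subset_rfl⟩
    | succ n ih =>
      rcases Nat.lt_or_ge m (n + 1) with h | h
      · have := ih (Nat.lt_succ_iff.mp h)
        rw [hseq_succ n]
        exact ⟨diff_subset.trans this.1, diff_subset.trans this.2⟩
      · rw [Nat.le_antisymm hmn h]
        exact ⟨subset_rfl, subset_rfl⟩
  have hdA : ∀ m n, m < n → Disjoint (An m) (An n) := by
    intro m n hmn
    have h1 : An n ⊆ (seq (m + 1)).1 := (hAsub n).trans (hanti (m + 1) n hmn).1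
    rw [hseq_succ m] at h1
    exact Set.disjoint_left.mpr fun x hx hx' => (h1 hx').2 hx
  have hdB : ∀ m n, m < n → Disjoint (Bn m) (Bn n) := by
    intro m n hmn
    have h1 : Bn n ⊆ (seq (m + 1)).2 := (hBsub n).trans (hanti (m + 1) n hmn).2
    rw [hseq_succ m] at h1
    exact Set.disjoint_left.mpr fun x hx hx' => (h1 hx').2 hx
  have hpwA : Pairwise (Disjoint on An) := by
    intro i j hij
    rcases lt_or_gt_of_ne hij with h | h
    · exact hdA i j h
    · exact (hdA j i h).symm
  have hpwB : Pairwise (Disjoint on Bn) := by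
    intro i j hij
    rcases lt_or_gt_of_ne hij with h | h
    · exact hdB i j h
    · exact (hdB j i h).symm
  -- the chosen pieces have small tail
  have htsum : (∑' n, μ (Bn n)) ≠ ∞ := by
    rw [← measure_iUnion hpwB hBmeas]
    exact measure_ne_top μ _
  have htend : Tendsto (fun n => μ (Bn n)) atTop (nhds 0) :=
    ENNReal.tendsto_atTop_zero_of_tsum_ne_top htsum
  -- residuals
  set RA : Set X := P \ ⋃ n, An n with hRA
  set RB : Set X := Q \ ⋃ n, Bn n with hRB
  have hRAsub : ∀ n, RA ⊆ (seq n).1 := by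
    intro n
    induction n with
    | zero => exact diff_subset
    | succ n ih =>
      rw [hseq_succ n]
      intro x hx
      exact ⟨ih hx, fun hc => hx.2 (mem_iUnion.mpr ⟨n, hc⟩)⟩
  have hRBsub : ∀ n, RB ⊆ (seq n).2 := by
    intro n
    induction n with
    | zero => exact diff_subset
    | succ n ih =>
      rw [hseq_succ n]
      intro x hx
      exact ⟨ih hx, fun hc => hx.2 (mem_iUnion.mpr ⟨n, hc⟩)⟩
  have hnull : ∀ T ∈ G, ν (T '' RA ∩ RB) = 0 := by
    intro T hT
    refine hνμ ?_
    have hub : ∀ n, μ (T '' RA ∩ RB) ≤ 2 * μ (Bn n) := by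
      intro n
      calc μ (T '' RA ∩ RB) ≤ μ (T '' (seq n).1 ∩ (seq n).2) :=
        measure_mono (inter_subset_inter (image_mono (hRAsub n)) (hRBsub n))
      _ ≤ ⨆ T' ∈ G, μ (T' '' (seq n).1 ∩ (seq n).2) :=
        le_biSup (fun T' => μ (T' '' (seq n).1 ∩ (seq n).2)) hT
      _ ≤ 2 * μ (Tch (seq n).1 (seq n).2 '' (seq n).1 ∩ (seq n).2) := hTchS _ _
      _ = 2 * μ (Bn n) := by rw [hBeq n]
    have h2 : Tendsto (fun n => 2 * μ (Bn n)) atTop (nhds 0) := by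
      have := ENNReal.Tendsto.const_mul htend (Or.inr (ENNReal.ofNat_ne_top (n := 2)))
      simpa using this
    have := ge_of_tendsto h2 (Eventually.of_forall hub)
    exact le_antisymm this (zero_le)
  refine ⟨An, Tn, ⟨hAmeas, fun n => (hAsub n).trans (hsubP n).1, hTnG,
    fun n => (hBsub n).trans (hsubP n).2, hpwA, hpwB⟩, ?_⟩
  by_cases h1 : ν RA = 0
  · exact Or.inl h1
  by_cases h2 : ν RB = 0
  · exact Or.inr h2
  obtain ⟨T, hT, hTpos⟩ := exists_image_inter_pos hG herg
    (hP.diff (MeasurableSet.iUnion hAmeas)) (hQ.diff (MeasurableSet.iUnion hBmeas)) h1 h2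
  exact absurd (hnull T hT) hTpos

end Exh

section Equi

variable [MeasurableSpace X] [StandardBorelSpace X] {ν : MeasureTheory.Measure X}
  {G : Set (X → X)} [SigmaFinite ν]

lemma PartialFam.measB {P Q : Set X} {A : ℕ → Set X} {f : ℕ → X → X}
    (hG : IsFullGroup ν G) (hfam : PartialFam ν G P Q A f) (n : ℕ) :
    MeasurableSet (f n '' A n) :=
  (memG_bij hG (hfam.2.2.1 n)).meas_image (hfam.1 n)

lemma PartialFam.measure_eq {P Q : Set X} {A : ℕ → Set X} {f : ℕ → X → X}
    (hG : IsFullGroup ν G) (hfam : PartialFam ν G P Q A f) :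
    ν (⋃ n, A n) = ν (⋃ n, f n '' A n) := by
  rw [measure_iUnion hfam.2.2.2.2.1 hfam.1, measure_iUnion hfam.2.2.2.2.2 (hfam.measB hG)]
  exact tsum_congr fun n => ((memG_bij hG (hfam.2.2.1 n)).measure_image (hfam.1 n)).symm

lemma measure_split {P : Set X} (hP : MeasurableSet P) {U : Set X} (hU : MeasurableSet U)
    (hUP : U ⊆ P) : ν P = ν U + ν (P \ U) := by
  rw [← measure_union (disjoint_sdiff_right) (hP.diff hU), Set.union_diff_cancel hUP]

/-- Injection lemma: a finite-measure set can be injected into a set of larger measure. -/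
lemma inj_of_le (hG : IsFullGroup ν G) (herg : IsErgodicSet ν G)
    {P Q : Set X} (hP : MeasurableSet P) (hQ : MeasurableSet Q)
    (hPfin : ν P ≠ ∞) (hle : ν P ≤ ν Q) :
    ∃ (A : ℕ → Set X) (f : ℕ → X → X), PartialFam ν G P Q A f ∧ ν (P \ ⋃ n, A n) = 0 := by
  obtain ⟨A, f, hfam, hres⟩ := exh hG herg hP hQ
  rcases hres with h | h
  · exact ⟨A, f, hfam, h⟩
  refine ⟨A, f, hfam, ?_⟩
  have hUA : MeasurableSet (⋃ n, A n) := MeasurableSet.iUnion hfam.1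
  have hUB : MeasurableSet (⋃ n, f n '' A n) := MeasurableSet.iUnion (hfam.measB hG)
  have hsplitP : ν P = ν (⋃ n, A n) + ν (P \ ⋃ n, A n) :=
    measure_split hP hUA (iUnion_subset hfam.2.1)
  have hsplitQ : ν Q = ν (⋃ n, f n '' A n) + ν (Q \ ⋃ n, f n '' A n) :=
    measure_split hQ hUB (iUnion_subset hfam.2.2.2.1)
  have hAB := hfam.measure_eq hG
  have hQA : ν Q = ν (⋃ n, A n) := by rw [hsplitQ, h, add_zero, hAB]
  have hUAfin : ν (⋃ n, A n) ≠ ∞ := by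
    refine ne_top_of_le_ne_top hPfin (measure_mono (iUnion_subset hfam.2.1))
  have : ν (⋃ n, A n) + ν (P \ ⋃ n, A n) ≤ ν (⋃ n, A n) + 0 := by
    rw [add_zero, ← hsplitP, ← hQA]
    exact hle
  simpa using (ENNReal.add_le_add_iff_left hUAfin).mp this

/-- Equidecomposition in the finite measure case. -/
lemma equi_of_fin (hG : IsFullGroup ν G) (herg : IsErgodicSet ν G)
    {P Q : Set X} (hP : MeasurableSet P) (hQ : MeasurableSet Q)
    (hPfin : ν P ≠ ∞) (heq : ν P = ν Q) :
    ∃ (A : ℕ → Set X) (f : ℕ → X → X), PartialFam ν G P Q A f ∧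
      ν (P \ ⋃ n, A n) = 0 ∧ ν (Q \ ⋃ n, f n '' A n) = 0 := by
  obtain ⟨A, f, hfam, hres⟩ := exh hG herg hP hQ
  have hUA : MeasurableSet (⋃ n, A n) := MeasurableSet.iUnion hfam.1
  have hUB : MeasurableSet (⋃ n, f n '' A n) := MeasurableSet.iUnion (hfam.measB hG)
  have hsplitP : ν P = ν (⋃ n, A n) + ν (P \ ⋃ n, A n) :=
    measure_split hP hUA (iUnion_subset hfam.2.1)
  have hsplitQ : ν Q = ν (⋃ n, f n '' A n) + ν (Q \ ⋃ n, f n '' A n) :=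
    measure_split hQ hUB (iUnion_subset hfam.2.2.2.1)
  have hAB := hfam.measure_eq hG
  have hUAfin : ν (⋃ n, A n) ≠ ∞ :=
    ne_top_of_le_ne_top hPfin (measure_mono (iUnion_subset hfam.2.1))
  refine ⟨A, f, hfam, ?_⟩
  rcases hres with h | h
  · refine ⟨h, ?_⟩
    have : ν (⋃ n, f n '' A n) + ν (Q \ ⋃ n, f n '' A n) = ν (⋃ n, f n '' A n) + 0 := by
      rw [add_zero, ← hsplitQ, ← heq, hsplitP, h, add_zero, hAB]
    rw [← hAB] at this
    exact (ENNReal.add_right_inj hUAfin).mp this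
  · refine ⟨?_, h⟩
    have : ν (⋃ n, A n) + ν (P \ ⋃ n, A n) = ν (⋃ n, A n) + 0 := by
      rw [add_zero, ← hsplitP, heq, hsplitQ, h, add_zero, hAB]
    exact (ENNReal.add_right_inj hUAfin).mp this

lemma exists_partition_finite {P : Set X} (hP : MeasurableSet P) :
    ∃ E : ℕ → Set X, (∀ n, MeasurableSet (E n)) ∧ (∀ n, E n ⊆ P) ∧
      Pairwise (Disjoint on E) ∧ (⋃ n, E n) = P ∧ ∀ n, ν (E n) ≠ ∞ := by
  refine ⟨fun n => P ∩ disjointed (spanningSets ν) n,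
    fun n => hP.inter (MeasurableSet.disjointed (measurableSet_spanningSets ν) n),
    fun n => inter_subset_left, ?_, ?_, fun n => ?_⟩
  · intro i j hij
    exact ((disjoint_disjointed _) hij).mono inter_subset_right inter_subset_right
  · rw [← inter_iUnion, iUnion_disjointed, iUnion_spanningSets, inter_univ]
  · refine ne_top_of_le_ne_top (measure_spanningSets_lt_top ν n).ne
      (measure_mono ((inter_subset_right).trans (disjointed_subset _ _)))

end Equi

lemma PartialFam.mono [MeasurableSpace X] {ν : MeasureTheory.Measure X} {G : Set (X → X)}
    {P Q P' Q' : Set X} {A : ℕ → Set X} {f : ℕ → X → X}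
    (h : PartialFam ν G P Q A f) (hP : P ⊆ P') (hQ : Q ⊆ Q') : PartialFam ν G P' Q' A f :=
  ⟨h.1, fun n => (h.2.1 n).trans hP, h.2.2.1, fun n => (h.2.2.2.1 n).trans hQ,
    h.2.2.2.2.1, h.2.2.2.2.2⟩

/-- State for the back-and-forth construction. -/
structure BFSt (X : Type*) where
  used : Set X
  cov : Set X
  A : ℕ → Set X
  f : ℕ → X → X

section Inf

variable [MeasurableSpace X] [StandardBorelSpace X] {ν : MeasureTheory.Measure X}
  {G : Set (X → X)} [SigmaFinite ν]

/-- Equidecomposition in the infinite measure case, via back-and-forth. -/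
lemma equi_of_inf (hG : IsFullGroup ν G) (herg : IsErgodicSet ν G)
    {P Q : Set X} (hP : MeasurableSet P) (hQ : MeasurableSet Q)
    (hPinf : ν P = ∞) (hQinf : ν Q = ∞) :
    ∃ (A : ℕ → Set X) (f : ℕ → X → X), PartialFam ν G P Q A f ∧
      ν (P \ ⋃ n, A n) = 0 ∧ ν (Q \ ⋃ n, f n '' A n) = 0 := by
  obtain ⟨E, hEmeas, hEsub, _, hEun, hEfin⟩ := exists_partition_finite (ν := ν) hP
  obtain ⟨F, hFmeas, hFsub, _, hFun, hFfin⟩ := exists_partition_finite (ν := ν) hQ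
  set Inv : ℕ → BFSt X → Prop := fun j s =>
    MeasurableSet s.used ∧ MeasurableSet s.cov ∧ s.used ⊆ P ∧ s.cov ⊆ Q ∧
    ν s.used ≠ ∞ ∧ ν s.cov ≠ ∞ ∧
    (∀ m, 2 * m + 1 ≤ j → ν (E m \ s.used) = 0) ∧
    (∀ m, 2 * m + 2 ≤ j → ν (F m \ s.cov) = 0) with hInvdef
  set Rel : BFSt X → BFSt X → Prop := fun s s' =>
    PartialFam ν G (P \ s.used) (Q \ s.cov) s'.A s'.f ∧
    s'.used = s.used ∪ ⋃ n, s'.A n ∧ s'.cov = s.cov ∪ ⋃ n, s'.f n '' s'.A n with hReldef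
  -- the one-step existence
  have hex : ∀ j (s : BFSt X), Inv j s → ∃ s', Inv (j + 1) s' ∧ Rel s s' := by
    intro j s hs
    obtain ⟨hum, hcm, hup, hcq, huf, hcf, hce, hcfv⟩ := hs
    rcases Nat.even_or_odd j with ⟨m, hm⟩ | ⟨m, hm⟩
    · -- even stage `j = 2m`: cover `E m` into `Q \ cov`
      have hm' : j = 2 * m := by omega
      have hS : MeasurableSet (E m \ s.used) := (hEmeas m).diff hum
      have hT : MeasurableSet (Q \ s.cov) := hQ.diff hcm
      have hSfin : ν (E m \ s.used) ≠ ∞ :=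
        ne_top_of_le_ne_top (hEfin m) (measure_mono diff_subset)
      have hTinf : ν (Q \ s.cov) = ∞ := by
        by_contra hne
        have := measure_split (ν := ν) hQ hcm hcq
        rw [hQinf] at this
        exact (ENNReal.add_ne_top.mpr ⟨hcf, hne⟩) this.symm
      obtain ⟨A, f, hfam, hres⟩ := inj_of_le hG herg hS hT hSfin (hTinf ▸ le_top)
      have hUAfin : ν (⋃ n, A n) ≠ ∞ :=
        ne_top_of_le_ne_top hSfin (measure_mono (iUnion_subset hfam.2.1))
      have hUBfin : ν (⋃ n, f n '' A n) ≠ ∞ := by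
        rw [← hfam.measure_eq hG]; exact hUAfin
      refine ⟨⟨s.used ∪ ⋃ n, A n, s.cov ∪ ⋃ n, f n '' A n, A, f⟩,
        ⟨hum.union (MeasurableSet.iUnion hfam.1),
         hcm.union (MeasurableSet.iUnion (hfam.measB hG)),
         union_subset hup (iUnion_subset fun n => (hfam.2.1 n).trans
           (diff_subset.trans (hEsub m))),
         union_subset hcq (iUnion_subset fun n => (hfam.2.2.2.1 n).trans diff_subset),
         ?_, ?_, ?_, ?_⟩,
        hfam.mono (diff_subset_diff_left (hEsub m)) subset_rfl, rfl, rfl⟩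
      · exact ne_top_of_le_ne_top (ENNReal.add_ne_top.mpr ⟨huf, hUAfin⟩)
          (measure_union_le _ _)
      · exact ne_top_of_le_ne_top (ENNReal.add_ne_top.mpr ⟨hcf, hUBfin⟩)
          (measure_union_le _ _)
      · -- coverage of the `E`'s
        intro m' hm'le
        rcases Nat.lt_or_ge (2 * m' + 1) (j + 1) with hlt | hge
        · have h0 := hce m' (by omega)
          refine le_antisymm (le_trans (measure_mono ?_) h0.le) (zero_le)
          exact diff_subset_diff_right subset_union_left
        · have : m' = m := by omega
          subst this
          refine le_antisymm (le_trans (measure_mono ?_) hres.le) (zero_le)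
          intro x hx
          exact ⟨⟨hx.1, fun hc => hx.2 (Or.inl hc)⟩, fun hc => hx.2 (Or.inr hc)⟩
      · -- coverage of the `F`'s : no new case at an even stage
        intro m' hm'le
        have h0 := hcfv m' (by omega)
        refine le_antisymm (le_trans (measure_mono ?_) h0.le) (zero_le)
        exact diff_subset_diff_right subset_union_left
    · -- odd stage `j = 2m+1`: cover `F m` into `P \ used`, then invert
      have hS : MeasurableSet (F m \ s.cov) := (hFmeas m).diff hcm
      have hT : MeasurableSet (P \ s.used) := hP.diff hum
      have hSfin : ν (F m \ s.cov) ≠ ∞ :=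
        ne_top_of_le_ne_top (hFfin m) (measure_mono diff_subset)
      have hTinf : ν (P \ s.used) = ∞ := by
        by_contra hne
        have := measure_split (ν := ν) hP hum hup
        rw [hPinf] at this
        exact (ENNReal.add_ne_top.mpr ⟨huf, hne⟩) this.symm
      obtain ⟨A, f, hfam, hres⟩ := inj_of_le hG herg hS hT hSfin (hTinf ▸ le_top)
      choose g hgG hgl hgr using fun n => memG_inv hG (hfam.2.2.1 n)
      have hginv : ∀ n, g n '' (f n '' A n) = A n := by
        intro n
        rw [← image_comp]
        have : g n ∘ f n = id := funext (hgl n)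
        rw [this, image_id]
      have hfam' : PartialFam ν G (P \ s.used) (Q \ s.cov) (fun n => f n '' A n) g := by
        refine ⟨fun n => hfam.measB hG n, fun n => hfam.2.2.2.1 n, hgG, fun n => ?_,
          hfam.2.2.2.2.2, ?_⟩
        · rw [hginv n]
          exact (hfam.2.1 n).trans (diff_subset_diff_left (hFsub m))
        · have heq : (fun n => g n '' ((fun k => f k '' A k) n)) = A := funext hginv
          rw [heq]
          exact hfam.2.2.2.2.1
      have hUAfin : ν (⋃ n, A n) ≠ ∞ :=
        ne_top_of_le_ne_top hSfin (measure_mono (iUnion_subset hfam.2.1))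
      have hUBfin : ν (⋃ n, f n '' A n) ≠ ∞ := by
        rw [← hfam.measure_eq hG]; exact hUAfin
      have hcovimg : s.cov ∪ ⋃ n, A n = s.cov ∪ ⋃ n, g n '' (f n '' A n) := by
        rw [funext hginv]
      refine ⟨⟨s.used ∪ ⋃ n, f n '' A n, s.cov ∪ ⋃ n, A n, fun n => f n '' A n, g⟩,
        ⟨hum.union (MeasurableSet.iUnion fun n => hfam.measB hG n),
         hcm.union (MeasurableSet.iUnion hfam.1),
         union_subset hup (iUnion_subset fun n => (hfam.2.2.2.1 n).trans diff_subset),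
         union_subset hcq (iUnion_subset fun n => (hfam.2.1 n).trans
           (diff_subset.trans (hFsub m))),
         ?_, ?_, ?_, ?_⟩,
        hfam', rfl, hcovimg⟩
      · exact ne_top_of_le_ne_top (ENNReal.add_ne_top.mpr ⟨huf, hUBfin⟩)
          (measure_union_le _ _)
      · exact ne_top_of_le_ne_top (ENNReal.add_ne_top.mpr ⟨hcf, hUAfin⟩)
          (measure_union_le _ _)
      · -- coverage of the `E`'s : no new case at an odd stage
        intro m' hm'le
        have h0 := hce m' (by omega)
        refine le_antisymm (le_trans (measure_mono ?_) h0.le) (zero_le)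
        exact diff_subset_diff_right subset_union_left
      · -- coverage of the `F`'s
        intro m' hm'le
        rcases Nat.lt_or_ge (2 * m' + 2) (j + 1) with hlt | hge
        · have h0 := hcfv m' (by omega)
          refine le_antisymm (le_trans (measure_mono ?_) h0.le) (zero_le)
          exact diff_subset_diff_right subset_union_left
        · have : m' = m := by omega
          subst this
          refine le_antisymm (le_trans (measure_mono ?_) hres.le) (zero_le)
          intro x hx
          exact ⟨⟨hx.1, fun hc => hx.2 (Or.inl hc)⟩, fun hc => hx.2 (Or.inr hc)⟩
  -- iterate
  have hInv0 : Inv 0 ⟨∅, ∅, fun _ => ∅, fun _ => id⟩ := by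
    refine ⟨MeasurableSet.empty, MeasurableSet.empty, empty_subset _, empty_subset _,
      by simp, by simp, fun m hm => by omega, fun m hm => by omega⟩
  choose stf hstf1 hstf2 using hex
  let seq : (j : ℕ) → {s : BFSt X // Inv j s} := fun j =>
    Nat.rec ⟨⟨∅, ∅, fun _ => ∅, fun _ => id⟩, hInv0⟩
      (fun j p => ⟨stf j p.1 p.2, hstf1 j p.1 p.2⟩) j
  have hrel : ∀ j, Rel (seq j).1 (seq (j + 1)).1 := fun j => hstf2 j (seq j).1 (seq j).2
  set used : ℕ → Set X := fun j => (seq j).1.used with hused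
  set cov : ℕ → Set X := fun j => (seq j).1.cov with hcov
  set chA : ℕ → ℕ → Set X := fun j => (seq (j + 1)).1.A with hchA
  set chf : ℕ → ℕ → X → X := fun j => (seq (j + 1)).1.f with hchf
  have hfamj : ∀ j, PartialFam ν G (P \ used j) (Q \ cov j) (chA j) (chf j) :=
    fun j => (hrel j).1
  have husucc : ∀ j, used (j + 1) = used j ∪ ⋃ n, chA j n := fun j => (hrel j).2.1
  have hcsucc : ∀ j, cov (j + 1) = cov j ∪ ⋃ n, chf j n '' chA j n := fun j => (hrel j).2.2
  have humono : ∀ j j', j ≤ j' → used j ⊆ used j' := by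
    intro j j' hjj'
    induction j' with
    | zero => rw [Nat.le_zero.mp hjj']
    | succ j' ih =>
      rcases Nat.lt_or_ge j (j' + 1) with h | h
      · rw [husucc j']
        exact (ih (Nat.lt_succ_iff.mp h)).trans subset_union_left
      · rw [Nat.le_antisymm hjj' h]
  have hcmono : ∀ j j', j ≤ j' → cov j ⊆ cov j' := by
    intro j j' hjj'
    induction j' with
    | zero => rw [Nat.le_zero.mp hjj']
    | succ j' ih =>
      rcases Nat.lt_or_ge j (j' + 1) with h | h
      · rw [hcsucc j']
        exact (ih (Nat.lt_succ_iff.mp h)).trans subset_union_left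
      · rw [Nat.le_antisymm hjj' h]
  -- global family
  set Ag : ℕ → Set X := fun k => chA (Nat.unpair k).1 (Nat.unpair k).2 with hAg
  set fg : ℕ → X → X := fun k => chf (Nat.unpair k).1 (Nat.unpair k).2 with hfg
  have hdisjA : ∀ k k', k ≠ k' → Disjoint (Ag k) (Ag k') := by
    have key : ∀ j n j' n', j < j' → Disjoint (chA j n) (chA j' n') := by
      intro j n j' n' hjj'
      have h1 : chA j n ⊆ used (j + 1) := by
        rw [husucc j]
        exact (subset_iUnion _ n).trans subset_union_right
      have h2 : chA j' n' ⊆ P \ used j' := (hfamj j').2.1 n'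
      refine Set.disjoint_left.mpr fun x hx hx' => ?_
      exact (h2 hx').2 (humono (j + 1) j' hjj' (h1 hx))
    intro k k' hkk'
    rcases Nat.lt_trichotomy (Nat.unpair k).1 (Nat.unpair k').1 with h | h | h
    · exact key _ _ _ _ h
    · have hn : (Nat.unpair k).2 ≠ (Nat.unpair k').2 := by
        intro hc
        apply hkk'
        have : Nat.unpair k = Nat.unpair k' := Prod.ext h hc
        have := congrArg (fun p : ℕ × ℕ => Nat.pair p.1 p.2) this
        simpa [Nat.pair_unpair] using this
      simpa [hAg, h] using (hfamj (Nat.unpair k').1).2.2.2.2.1 hn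
    · exact (key _ _ _ _ h).symm
  have hdisjB : ∀ k k', k ≠ k' → Disjoint (fg k '' Ag k) (fg k' '' Ag k') := by
    have key : ∀ j n j' n', j < j' →
        Disjoint (chf j n '' chA j n) (chf j' n' '' chA j' n') := by
      intro j n j' n' hjj'
      have h1 : chf j n '' chA j n ⊆ cov (j + 1) := by
        rw [hcsucc j]
        exact (subset_iUnion (fun n => chf j n '' chA j n) n).trans subset_union_right
      have h2 : chf j' n' '' chA j' n' ⊆ Q \ cov j' := (hfamj j').2.2.2.1 n'
      refine Set.disjoint_left.mpr fun x hx hx' => ?_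
      exact (h2 hx').2 (hcmono (j + 1) j' hjj' (h1 hx))
    intro k k' hkk'
    rcases Nat.lt_trichotomy (Nat.unpair k).1 (Nat.unpair k').1 with h | h | h
    · exact key _ _ _ _ h
    · have hn : (Nat.unpair k).2 ≠ (Nat.unpair k').2 := by
        intro hc
        apply hkk'
        have : Nat.unpair k = Nat.unpair k' := Prod.ext h hc
        have := congrArg (fun p : ℕ × ℕ => Nat.pair p.1 p.2) this
        simpa [Nat.pair_unpair] using this
      simpa [hAg, hfg, h] using (hfamj (Nat.unpair k').1).2.2.2.2.2 hn
    · exact (key _ _ _ _ h).symm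
  have hUA : (⋃ k, Ag k) = ⋃ j, ⋃ n, chA j n := by
    ext x
    simp only [mem_iUnion, hAg]
    constructor
    · rintro ⟨k, hk⟩
      exact ⟨_, _, hk⟩
    · rintro ⟨j, n, hjn⟩
      exact ⟨Nat.pair j n, by rwa [Nat.unpair_pair]⟩
  have hUB : (⋃ k, fg k '' Ag k) = ⋃ j, ⋃ n, chf j n '' chA j n := by
    ext x
    simp only [mem_iUnion, hAg, hfg]
    constructor
    · rintro ⟨k, hk⟩
      exact ⟨_, _, hk⟩
    · rintro ⟨j, n, hjn⟩
      exact ⟨Nat.pair j n, by rwa [Nat.unpair_pair]⟩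
  have husubU : ∀ j, used j ⊆ ⋃ k, Ag k := by
    intro j
    induction j with
    | zero => exact empty_subset _
    | succ j ih =>
      rw [husucc j, hUA]
      exact union_subset (ih.trans (by rw [hUA])) fun x hx =>
        mem_iUnion.mpr ⟨j, hx⟩
  have hcsubU : ∀ j, cov j ⊆ ⋃ k, fg k '' Ag k := by
    intro j
    induction j with
    | zero => exact empty_subset _
    | succ j ih =>
      rw [hcsucc j, hUB]
      exact union_subset (ih.trans (by rw [hUB])) fun x hx =>
        mem_iUnion.mpr ⟨j, hx⟩
  refine ⟨Ag, fg, ⟨fun k => (hfamj _).1 _, fun k => ((hfamj _).2.1 _).trans diff_subset,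
    fun k => (hfamj _).2.2.1 _, fun k => ((hfamj _).2.2.2.1 _).trans diff_subset,
    fun k k' h => hdisjA k k' h, fun k k' h => hdisjB k k' h⟩, ?_, ?_⟩
  · -- P-side residual
    have hsub : P \ (⋃ k, Ag k) ⊆ ⋃ m, (E m \ used (2 * m + 1)) := by
      intro x hx
      have hxP : x ∈ P := hx.1
      rw [← hEun] at hxP
      obtain ⟨m, hm⟩ := mem_iUnion.mp hxP
      refine mem_iUnion.mpr ⟨m, hm, fun hc => hx.2 (husubU (2 * m + 1) hc)⟩
    refine le_antisymm (le_trans (measure_mono hsub) ?_) (zero_le)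
    refine (measure_iUnion_null fun m => ?_).le
    exact (seq (2 * m + 1)).2.2.2.2.2.2.2.1 m le_rfl
  · -- Q-side residual
    have hsub : Q \ (⋃ k, fg k '' Ag k) ⊆ ⋃ m, (F m \ cov (2 * m + 2)) := by
      intro x hx
      have hxQ : x ∈ Q := hx.1
      rw [← hFun] at hxQ
      obtain ⟨m, hm⟩ := mem_iUnion.mp hxQ
      refine mem_iUnion.mpr ⟨m, hm, fun hc => hx.2 (hcsubU (2 * m + 2) hc)⟩
    refine le_antisymm (le_trans (measure_mono hsub) ?_) (zero_le)
    refine (measure_iUnion_null fun m => ?_).le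
    exact (seq (2 * m + 2)).2.2.2.2.2.2.2.2 m le_rfl

end Inf

section Main

variable [MeasurableSpace X] [StandardBorelSpace X] {ν : MeasureTheory.Measure X}
  {G : Set (X → X)} [SigmaFinite ν]

/-- Equidecomposition: two Borel sets of equal measure are matched by a piecewise-`G` map. -/
lemma equi (hG : IsFullGroup ν G) (herg : IsErgodicSet ν G)
    {P Q : Set X} (hP : MeasurableSet P) (hQ : MeasurableSet Q) (heq : ν P = ν Q) :
    ∃ (A : ℕ → Set X) (f : ℕ → X → X), PartialFam ν G P Q A f ∧
      ν (P \ ⋃ n, A n) = 0 ∧ ν (Q \ ⋃ n, f n '' A n) = 0 := by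
  rcases eq_or_ne (ν P) ∞ with h | h
  · exact equi_of_inf hG herg hP hQ h (heq ▸ h)
  · exact equi_of_fin hG herg hP hQ h heq

theorem exchanging_involution_exists' (hG : IsFullGroup ν G) (herg : IsErgodicSet ν G)
    (A B : Set X) (hA : MeasurableSet A) (hB : MeasurableSet B)
    (h : ν (A \ B) = ν (B \ A)) :
    ∃ U ∈ G, (∀ x, U (U x) = x) ∧ ({x | U x ≠ x} ⊆ (A \ B) ∪ (B \ A)) ∧
      ν ((U '' A) ∆ B) = 0 := by
  classical
  obtain ⟨Af, ff, hfam, hresA, hresB⟩ := equi hG herg (hA.diff hB) (hB.diff hA) h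
  obtain ⟨hAfmeas, hAfsub, hffG, hBfsub, hpwA, hpwB⟩ := hfam
  choose g hgG hgl hgr using fun n => memG_inv hG (hffG n)
  set Bf : ℕ → Set X := fun n => ff n '' Af n with hBfdef
  have hBfmeas : ∀ n, MeasurableSet (Bf n) := fun n => (memG_bij hG (hffG n)).meas_image (hAfmeas n)
  set NA : Set X := ⋃ n, Af n with hNAdef
  set NB : Set X := ⋃ n, Bf n with hNBdef
  have hNAmeas : MeasurableSet NA := MeasurableSet.iUnion hAfmeas
  have hNBmeas : MeasurableSet NB := MeasurableSet.iUnion hBfmeas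
  have hNAsub : NA ⊆ A \ B := iUnion_subset hAfsub
  have hNBsub : NB ⊆ B \ A := iUnion_subset hBfsub
  have hPQ : Disjoint (A \ B) (B \ A) :=
    Set.disjoint_left.mpr fun x hx hx' => hx'.2 hx.1
  have hAfBf : ∀ m n, Disjoint (Af m) (Bf n) := fun m n =>
    hPQ.mono ((hAfsub m).trans subset_rfl) (hBfsub n)
  have hAuniq : ∀ {m n : ℕ} {x : X}, x ∈ Af m → x ∈ Af n → m = n := by
    intro m n x hm hn
    by_contra hne
    exact Set.disjoint_left.mp (hpwA hne) hm hn
  have hBuniq : ∀ {m n : ℕ} {x : X}, x ∈ Bf m → x ∈ Bf n → m = n := by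
    intro m n x hm hn
    by_contra hne
    exact Set.disjoint_left.mp (hpwB hne) hm hn
  have hgB : ∀ n, g n '' Bf n = Af n := by
    intro n
    rw [hBfdef, ← image_comp]
    have : g n ∘ ff n = id := funext (hgl n)
    rw [this, image_id]
  set U : X → X := fun x =>
    if h1 : ∃ n, x ∈ Af n then ff (Classical.choose h1) x
    else if h2 : ∃ n, x ∈ Bf n then g (Classical.choose h2) x else x with hUdef
  have hUA : ∀ n x, x ∈ Af n → U x = ff n x := by
    intro n x hx
    have h1 : ∃ m, x ∈ Af m := ⟨n, hx⟩
    rw [hUdef]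
    dsimp only
    rw [dif_pos h1, hAuniq (Classical.choose_spec h1) hx]
  have hUB : ∀ n x, x ∈ Bf n → U x = g n x := by
    intro n x hx
    have h1 : ¬∃ m, x ∈ Af m := by
      rintro ⟨m, hm⟩
      exact Set.disjoint_left.mp (hAfBf m n) hm hx
    have h2 : ∃ m, x ∈ Bf m := ⟨n, hx⟩
    rw [hUdef]
    dsimp only
    rw [dif_neg h1, dif_pos h2, hBuniq (Classical.choose_spec h2) hx]
  have hUN : ∀ x, x ∉ NA → x ∉ NB → U x = x := by
    intro x hx1 hx2
    have h1 : ¬∃ m, x ∈ Af m := fun ⟨m, hm⟩ => hx1 (mem_iUnion.mpr ⟨m, hm⟩)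
    have h2 : ¬∃ m, x ∈ Bf m := fun ⟨m, hm⟩ => hx2 (mem_iUnion.mpr ⟨m, hm⟩)
    rw [hUdef]
    dsimp only
    rw [dif_neg h1, dif_neg h2]
  have hUmapsA : ∀ n x, x ∈ Af n → U x ∈ Bf n := by
    intro n x hx
    rw [hUA n x hx]
    exact mem_image_of_mem _ hx
  have hUmapsB : ∀ n x, x ∈ Bf n → U x ∈ Af n := by
    intro n x hx
    rw [hUB n x hx, ← hgB n]
    exact mem_image_of_mem _ hx
  -- U is an involution
  have hinvol : Function.Involutive U := by
    intro x
    by_cases h1 : ∃ n, x ∈ Af n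
    · obtain ⟨n, hn⟩ := h1
      have hB1 : U x ∈ Bf n := hUmapsA n x hn
      rw [hUB n (U x) hB1, hUA n x hn]
      exact hgl n x
    by_cases h2 : ∃ n, x ∈ Bf n
    · obtain ⟨n, hn⟩ := h2
      have hx1 : U x ∈ Af n := hUmapsB n x hn
      rw [hUB n x hn] at hx1 ⊢
      rw [hUA n _ hx1]
      exact hgr n x
    · have hx1 : x ∉ NA := fun hc => h1 (mem_iUnion.mp hc)
      have hx2 : x ∉ NB := fun hc => h2 (mem_iUnion.mp hc)
      rw [hUN x hx1 hx2, hUN x hx1 hx2]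
  -- preimage formula
  have hpre : ∀ S : Set X, U ⁻¹' S =
      (⋃ n, Af n ∩ ff n ⁻¹' S) ∪ ((⋃ n, Bf n ∩ g n ⁻¹' S) ∪ ((NA ∪ NB)ᶜ ∩ S)) := by
    intro S
    ext x
    simp only [mem_preimage, mem_union, mem_iUnion, mem_inter_iff, mem_compl_iff]
    constructor
    · intro hx
      by_cases h1 : ∃ n, x ∈ Af n
      · obtain ⟨n, hn⟩ := h1
        exact Or.inl ⟨n, hn, by rwa [← hUA n x hn]⟩
      by_cases h2 : ∃ n, x ∈ Bf n
      · obtain ⟨n, hn⟩ := h2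
        exact Or.inr (Or.inl ⟨n, hn, by rwa [← hUB n x hn]⟩)
      · have hx1 : x ∉ NA := fun hc => h1 (mem_iUnion.mp hc)
        have hx2 : x ∉ NB := fun hc => h2 (mem_iUnion.mp hc)
        refine Or.inr (Or.inr ⟨fun hc => ?_, by rwa [hUN x hx1 hx2] at hx⟩)
        rcases hc with hc | hc
        · exact hx1 hc
        · exact hx2 hc
    · rintro (⟨n, hn, hS⟩ | ⟨n, hn, hS⟩ | ⟨hc, hS⟩)
      · rwa [hUA n x hn]
      · rwa [hUB n x hn]
      · have hx1 : x ∉ NA := fun hx => hc (Or.inl hx)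
        have hx2 : x ∉ NB := fun hx => hc (Or.inr hx)
        rwa [hUN x hx1 hx2]
  have hUmeas : Measurable U := by
    intro S hS
    rw [hpre S]
    refine MeasurableSet.union (MeasurableSet.iUnion fun n =>
        (hAfmeas n).inter ((memG_bij hG (hffG n)).1 hS)) ?_
    refine MeasurableSet.union (MeasurableSet.iUnion fun n =>
        (hBfmeas n).inter ((memG_bij hG (hgG n)).1 hS)) ?_
    exact ((hNAmeas.union hNBmeas).compl).inter hS
  -- measure preservation
  have hUmp : MeasureTheory.MeasurePreserving U ν ν := by
    refine ⟨hUmeas, ?_⟩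
    refine MeasureTheory.Measure.ext fun S hS => ?_
    rw [MeasureTheory.Measure.map_apply hUmeas hS, hpre S]
    have hd1 : ∀ n, MeasurableSet (Af n ∩ ff n ⁻¹' S) :=
      fun n => (hAfmeas n).inter ((memG_bij hG (hffG n)).1 hS)
    have hd2 : ∀ n, MeasurableSet (Bf n ∩ g n ⁻¹' S) :=
      fun n => (hBfmeas n).inter ((memG_bij hG (hgG n)).1 hS)
    have hD2meas : MeasurableSet ((⋃ n, Bf n ∩ g n ⁻¹' S) ∪ ((NA ∪ NB)ᶜ ∩ S)) :=
      (MeasurableSet.iUnion hd2).union (((hNAmeas.union hNBmeas).compl).inter hS)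
    have hdisj1 : Disjoint (⋃ n, Af n ∩ ff n ⁻¹' S)
        ((⋃ n, Bf n ∩ g n ⁻¹' S) ∪ ((NA ∪ NB)ᶜ ∩ S)) := by
      refine Set.disjoint_left.mpr fun x hx hx' => ?_
      obtain ⟨n, hn⟩ := mem_iUnion.mp hx
      rcases hx' with hx' | hx'
      · obtain ⟨m, hm⟩ := mem_iUnion.mp hx'
        exact Set.disjoint_left.mp (hAfBf n m) hn.1 hm.1
      · exact hx'.1 (Or.inl (mem_iUnion.mpr ⟨n, hn.1⟩))
    have hdisj2 : Disjoint (⋃ n, Bf n ∩ g n ⁻¹' S) (((NA ∪ NB)ᶜ ∩ S)) := by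
      refine Set.disjoint_left.mpr fun x hx hx' => ?_
      obtain ⟨n, hn⟩ := mem_iUnion.mp hx
      exact hx'.1 (Or.inr (mem_iUnion.mpr ⟨n, hn.1⟩))
    rw [measure_union hdisj1 hD2meas,
      measure_union hdisj2 (((hNAmeas.union hNBmeas).compl).inter hS)]
    have hpw1 : Pairwise (Disjoint on fun n => Af n ∩ ff n ⁻¹' S) :=
      fun i j hij => (hpwA hij).mono inter_subset_left inter_subset_left
    have hpw2 : Pairwise (Disjoint on fun n => Bf n ∩ g n ⁻¹' S) :=
      fun i j hij => (hpwB hij).mono inter_subset_left inter_subset_left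
    rw [measure_iUnion hpw1 hd1, measure_iUnion hpw2 hd2]
    have he1 : ∀ n, ν (Af n ∩ ff n ⁻¹' S) = ν (Bf n ∩ S) := by
      intro n
      have := (memG_bij hG (hffG n)).measure_image (hd1 n)
      rw [Set.image_inter_preimage] at this
      exact this.symm
    have he2 : ∀ n, ν (Bf n ∩ g n ⁻¹' S) = ν (Af n ∩ S) := by
      intro n
      have := (memG_bij hG (hgG n)).measure_image (hd2 n)
      rw [Set.image_inter_preimage, hgB n] at this
      exact this.symm
    rw [tsum_congr he1, tsum_congr he2]
    have hNAS : ν (NA ∩ S) = ∑' n, ν (Af n ∩ S) := by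
      rw [hNAdef, iUnion_inter]
      exact measure_iUnion (fun i j hij => (hpwA hij).mono inter_subset_left inter_subset_left)
        (fun n => (hAfmeas n).inter hS)
    have hNBS : ν (NB ∩ S) = ∑' n, ν (Bf n ∩ S) := by
      rw [hNBdef, iUnion_inter]
      exact measure_iUnion (fun i j hij => (hpwB hij).mono inter_subset_left inter_subset_left)
        (fun n => (hBfmeas n).inter hS)
    rw [← hNAS, ← hNBS]
    have hSsplit : S = (NB ∩ S) ∪ ((NA ∩ S) ∪ ((NA ∪ NB)ᶜ ∩ S)) := by
      ext x
      simp only [mem_union, mem_inter_iff, mem_compl_iff]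
      constructor
      · intro hx
        by_cases h1 : x ∈ NB
        · exact Or.inl ⟨h1, hx⟩
        by_cases h2 : x ∈ NA
        · exact Or.inr (Or.inl ⟨h2, hx⟩)
        · exact Or.inr (Or.inr ⟨fun hc => hc.elim h2 h1, hx⟩)
      · intro hx
        rcases hx with hx | hx | hx
        · exact hx.2
        · exact hx.2
        · exact hx.2
    conv_rhs => rw [hSsplit]
    have hdA : Disjoint NA NB := hPQ.mono hNAsub hNBsub
    have hm2 : MeasurableSet ((NA ∪ NB)ᶜ ∩ S) := ((hNAmeas.union hNBmeas).compl).inter hS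
    have hm1 : MeasurableSet ((NA ∩ S) ∪ ((NA ∪ NB)ᶜ ∩ S)) :=
      (hNAmeas.inter hS).union hm2
    have hdj1 : Disjoint (NB ∩ S) ((NA ∩ S) ∪ ((NA ∪ NB)ᶜ ∩ S)) := by
      refine Set.disjoint_left.mpr fun x hx hx' => ?_
      rcases hx' with hx' | hx'
      · exact Set.disjoint_left.mp hdA hx'.1 hx.1
      · exact hx'.1 (Or.inr hx.1)
    have hdj2 : Disjoint (NA ∩ S) ((NA ∪ NB)ᶜ ∩ S) :=
      Set.disjoint_left.mpr fun x hx hx' => hx'.1 (Or.inl hx.1)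
    rw [measure_union hdj1 hm1, measure_union hdj2 hm2]
  have hUbij : IsMPBij ν U := ⟨hUmeas, hinvol.bijective, hUmp⟩
  -- U belongs to G by the gluing axiom
  have hUG : U ∈ G := by
    set Ap : ℕ → Set X := fun k => match k with
      | 0 => (NA ∪ NB)ᶜ
      | Nat.succ m => if m % 2 = 0 then Af (m / 2) else Bf (m / 2) with hApdef
    set Ts : ℕ → X → X := fun k => match k with
      | 0 => id
      | Nat.succ m => if m % 2 = 0 then ff (m / 2) else g (m / 2) with hTsdef
    have hAp0 : Ap 0 = (NA ∪ NB)ᶜ := rfl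
    have hApsucc : ∀ m, Ap (m + 1) = if m % 2 = 0 then Af (m / 2) else Bf (m / 2) :=
      fun m => rfl
    have hTs0 : Ts 0 = id := rfl
    have hTssucc : ∀ m, Ts (m + 1) = if m % 2 = 0 then ff (m / 2) else g (m / 2) :=
      fun m => rfl
    refine hG.2.2 U Ts Ap hUbij ?_ ?_ ?_ ?_ ?_
    · intro k
      match k with
      | 0 => exact hG.1.2.1
      | Nat.succ m =>
        rw [hTssucc m]
        by_cases hp : m % 2 = 0
        · rw [if_pos hp]; exact hffG _
        · rw [if_neg hp]; exact hgG _
    · intro k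
      match k with
      | 0 => exact (hNAmeas.union hNBmeas).compl
      | Nat.succ m =>
        rw [hApsucc m]
        by_cases hp : m % 2 = 0
        · rw [if_pos hp]; exact hAfmeas _
        · rw [if_neg hp]; exact hBfmeas _
    · intro k k' hkk'
      have hsub : ∀ m, Ap (m + 1) ⊆ NA ∪ NB := by
        intro m
        rw [hApsucc m]
        by_cases hp : m % 2 = 0
        · rw [if_pos hp]
          exact (subset_iUnion Af (m / 2)).trans subset_union_left
        · rw [if_neg hp]
          exact (subset_iUnion Bf (m / 2)).trans subset_union_right
      have hNdisj : ∀ m, Disjoint ((NA ∪ NB)ᶜ) (Ap (m + 1)) := fun m =>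
        disjoint_compl_left.mono_right (hsub m)
      show Disjoint (Ap k) (Ap k')
      match k, k' with
      | 0, 0 => exact absurd rfl hkk'
      | 0, Nat.succ m => rw [hAp0]; exact hNdisj m
      | Nat.succ m, 0 => rw [hAp0]; exact (hNdisj m).symm
      | Nat.succ m, Nat.succ m' =>
        have hmm' : m ≠ m' := fun hc => hkk' (by rw [hc])
        rw [hApsucc m, hApsucc m']
        by_cases hp : m % 2 = 0 <;> by_cases hp' : m' % 2 = 0
        · rw [if_pos hp, if_pos hp']
          exact hpwA (show m / 2 ≠ m' / 2 by omega)
        · rw [if_pos hp, if_neg hp']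
          exact hAfBf _ _
        · rw [if_neg hp, if_pos hp']
          exact (hAfBf _ _).symm
        · rw [if_neg hp, if_neg hp']
          exact hpwB (show m / 2 ≠ m' / 2 by omega)
    · refine eq_univ_of_forall fun x => ?_
      by_cases h1 : ∃ n, x ∈ Af n
      · obtain ⟨n, hn⟩ := h1
        refine mem_iUnion.mpr ⟨2 * n + 1, ?_⟩
        rw [hApsucc (2 * n), if_pos (by omega : (2 * n) % 2 = 0),
          (by omega : (2 * n) / 2 = n)]
        exact hn
      by_cases h2 : ∃ n, x ∈ Bf n
      · obtain ⟨n, hn⟩ := h2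
        refine mem_iUnion.mpr ⟨2 * n + 2, ?_⟩
        rw [hApsucc (2 * n + 1), if_neg (by omega : ¬(2 * n + 1) % 2 = 0),
          (by omega : (2 * n + 1) / 2 = n)]
        exact hn
      · refine mem_iUnion.mpr ⟨0, ?_⟩
        rw [hAp0]
        rintro (hc | hc)
        · exact h1 (mem_iUnion.mp hc)
        · exact h2 (mem_iUnion.mp hc)
    · intro k x hx
      match k with
      | 0 =>
        rw [hAp0] at hx
        rw [hTs0]
        have hx1 : x ∉ NA := fun hc => hx (Or.inl hc)
        have hx2 : x ∉ NB := fun hc => hx (Or.inr hc)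
        exact hUN x hx1 hx2
      | Nat.succ m =>
        rw [hApsucc m] at hx
        rw [hTssucc m]
        by_cases hp : m % 2 = 0
        · rw [if_pos hp] at hx ⊢
          exact hUA _ x hx
        · rw [if_neg hp] at hx ⊢
          exact hUB _ x hx
  -- conclusions
  refine ⟨U, hUG, fun x => hinvol x, ?_, ?_⟩
  · intro x hx
    by_cases h1 : x ∈ NA
    · exact Or.inl (hNAsub h1)
    by_cases h2 : x ∈ NB
    · exact Or.inr (hNBsub h2)
    · exact absurd (hUN x h1 h2) hx
  · -- ν ((U '' A) ∆ B) = 0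
    set RA : Set X := (A \ B) \ NA with hRAdef
    set RB : Set X := (B \ A) \ NB with hRBdef
    have hincl : (U '' A) ∆ B ⊆ (U '' RA) ∪ RB := by
      rw [Set.symmDiff_def]
      rintro x (⟨⟨y, hyA, rfl⟩, hxB⟩ | ⟨hxB, hxUA⟩)
      · -- x = U y ∉ B
        by_cases h1 : ∃ n, y ∈ Af n
        · obtain ⟨n, hn⟩ := h1
          exact absurd ((hNBsub (mem_iUnion.mpr ⟨n, hUmapsA n y hn⟩)).1) hxB
        by_cases h2 : ∃ n, y ∈ Bf n
        · obtain ⟨n, hn⟩ := h2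
          exact absurd hyA (hBfsub n hn).2
        · have hy1 : y ∉ NA := fun hc => h1 (mem_iUnion.mp hc)
          have hy2 : y ∉ NB := fun hc => h2 (mem_iUnion.mp hc)
          have hyx : U y = y := hUN y hy1 hy2
          refine Or.inl ⟨y, ⟨⟨hyA, ?_⟩, hy1⟩, rfl⟩
          rwa [hyx] at hxB
      · -- x ∈ B, x ∉ U '' A
        by_cases h2 : ∃ n, x ∈ Bf n
        · obtain ⟨n, hn⟩ := h2
          obtain ⟨z, hz, rfl⟩ := hn
          exact absurd ⟨z, (hAfsub n hz).1, (hUA n z hz).symm ▸ rfl⟩ hxUA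
        have hx2 : x ∉ NB := fun hc => h2 (mem_iUnion.mp hc)
        by_cases hxA : x ∈ A
        · have hx1 : x ∉ NA := fun hc => (hNAsub hc).2 hxB
          exact absurd ⟨x, hxA, hUN x hx1 hx2⟩ hxUA
        · exact Or.inr ⟨⟨hxB, hxA⟩, hx2⟩
    have hRAmeas : MeasurableSet RA := (hA.diff hB).diff hNAmeas
    have hRA0 : ν RA = 0 := hresA
    have hRB0 : ν RB = 0 := hresB
    have hURA : ν (U '' RA) = 0 := by
      rw [hUbij.measure_image hRAmeas]
      exact hRA0
    refine le_antisymm ?_ (zero_le)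
    calc ν ((U '' A) ∆ B) ≤ ν ((U '' RA) ∪ RB) := measure_mono hincl
    _ ≤ ν (U '' RA) + ν RB := measure_union_le _ _
    _ = 0 := by rw [hURA, hRB0, add_zero]

end Main

/-- Exchanging involutions: in an ergodic full group, for Borel sets `A, B` with
`ν(A \ B) = ν(B \ A)`, there is an involution `U ∈ G` supported in `A Δ B` with `U(A) = B`
(all up to null sets). -/
theorem exchanging_involution_exists [MeasurableSpace X] [StandardBorelSpace X]
    (ν : MeasureTheory.Measure X) [SigmaFinite ν] [NullSingletonClass ν]
    (G : Set (X → X)) (hG : IsFullGroup ν G) (herg : IsErgodicSet ν G)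
    (A B : Set X) (hA : MeasurableSet A) (hB : MeasurableSet B)
    (h : ν (A \ B) = ν (B \ A)) :
    ∃ U ∈ G, ν {x | U (U x) ≠ x} = 0 ∧ ν (supp U \ (A ∆ B)) = 0 ∧
      ν ((U '' A) ∆ B) = 0 := by
  obtain ⟨U, hUG, hinv, hsupp, himg⟩ := exchanging_involution_exists' hG herg A B hA hB h
  refine ⟨U, hUG, ?_, ?_, himg⟩
  · have he : {x | U (U x) ≠ x} = ∅ := by
      ext x
      simp [hinv x]
    rw [he]
    exact measure_empty
  · have he : supp U \ (A ∆ B) = ∅ := by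
      rw [Set.eq_empty_iff_forall_notMem]
      intro x hx
      have h1 := hsupp hx.1
      apply hx.2
      rw [Set.symmDiff_def]
      exact h1
    rw [he]
    exact measure_empty
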